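/- Let λ be a real number. For every integer n ≥ 1 and every real x, one has M_{n+1,λ}/(n+1) = (x+1)_{n,λ} + Σ_{j=1}^{n} Σ_{k=1}^{j} C(n,j) (x+1)_{n-j,λ} (-1)^k k! · B_{j,k}(β_{1,λ}(x), β_{2,λ}(x), …, β_{j-k+1,λ}(x)), where M_{m,λ} = (2)_{m,λ} - (1)_{m,λ} are the dimorphic Mersenne numbers and B_{j,k} denotes the incomplete Bell polynomial. -/

import Mathlib

/-- The degenerate falling factorial `(x)_{n,λ} = x (x - λ) (x - 2λ) ⋯ (x - (n-1)λ)`,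
with `(x)_{0,λ} = 1`. -/
def degFallingFactorial (lam x : ℝ) (n : ℕ) : ℝ :=
  ∏ i ∈ Finset.range n, (x - i * lam)

/-- The degenerate exponential `e_λ^x(t) = ∑_{n=0}^∞ (x)_{n,λ} t^n/n!` as a formal
power series in `ℝ[[t]]`. -/
noncomputable def degExpSeries (lam x : ℝ) : PowerSeries ℝ :=
  PowerSeries.mk fun n => degFallingFactorial lam x n / (n.factorial : ℝ)

/-- The formal power series `(e_λ(t) - 1)/t`, whose constant term is `1`. -/
noncomputable def degExpSubOneDivT (lam : ℝ) : PowerSeries ℝ :=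
  PowerSeries.mk fun n => degFallingFactorial lam 1 (n + 1) / ((n + 1).factorial : ℝ)

/-- The generating series `(t/(e_λ(t)-1)) ⬝ e_λ^x(t) = ∑_{n=0}^∞ β_{n,λ}(x) t^n/n!` of the
degenerate Bernoulli polynomials, where `t/(e_λ(t)-1)` denotes the multiplicative inverse
of the series `(e_λ(t)-1)/t`. -/
noncomputable def degBernoulliSeries (lam x : ℝ) : PowerSeries ℝ :=
  (degExpSubOneDivT lam)⁻¹ * degExpSeries lam x

/-- The degenerate Bernoulli polynomial `β_{n,λ}(x)`, read off from its generating series. -/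
noncomputable def degBernoulli (lam x : ℝ) (n : ℕ) : ℝ :=
  (n.factorial : ℝ) * PowerSeries.coeff n (degBernoulliSeries lam x)

/-- The dimorphic Mersenne number `M_{n,λ} = (2)_{n,λ} - (1)_{n,λ}`. -/
def dimorphicMersenne (lam : ℝ) (n : ℕ) : ℝ :=
  degFallingFactorial lam 2 n - degFallingFactorial lam 1 n

/-- The incomplete Bell polynomial `B_{n,k}(x_1, …, x_{n-k+1})`: the sum over all tuples of
nonnegative integers `l_1, …, l_{n-k+1}` with `l_1 + ⋯ + l_{n-k+1} = k` and
`l_1 + 2 l_2 + ⋯ + (n-k+1) l_{n-k+1} = n` of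
`(n!/(l_1! ⋯ l_{n-k+1}!)) (x_1/1!)^{l_1} ⋯ (x_{n-k+1}/(n-k+1)!)^{l_{n-k+1}}`.
The arguments are given by `x : ℕ → ℝ`, with `x i` playing the role of `x_i`. -/
noncomputable def incompleteBell (n k : ℕ) (x : ℕ → ℝ) : ℝ :=
  ∑ l ∈ (Fintype.piFinset fun _ : Fin (n - k + 1) => Finset.range (n + 1)).filter
      (fun l => (∑ i, l i) = k ∧ (∑ i, (i.1 + 1) * l i) = n),
    ((n.factorial : ℝ) / ∏ i, ((l i).factorial : ℝ)) *
      ∏ i, (x (i.1 + 1) / ((i.1 + 1).factorial : ℝ)) ^ l i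

/-! With `E_x = e_λ^x(t)` and `D = (e_λ(t) - 1)/t`, the Bernoulli series is `β = D⁻¹ E_x`, and the
degenerate Vandermonde identity `E_x E_y = E_{x+y}` gives `β⁻¹ E_{x+1} = E_1 D`. Since
`t E_1 D = E_1 (E_1 - 1) = E_2 - E_1`, the `n`-th coefficient of `E_1 D` is `M_{n+1,λ}/(n+1)!`.
On the other side `β⁻¹ = ∑_k (-1)^k (β - 1)^k`, and the multinomial theorem gives
`j! [t^j] (β - 1)^k = k! B_{j,k}(β_{1,λ}(x), β_{2,λ}(x), …)`. Comparing `n`-th coefficients of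
`β⁻¹ E_{x+1}` proves the identity. -/

open Finset PowerSeries Nat

lemma Finset.sum_range_succ_eq_add_sum_Icc {M : Type*} [AddCommMonoid M] (f : ℕ → M) (n : ℕ) :
    ∑ i ∈ range (n + 1), f i = f 0 + ∑ i ∈ Icc 1 n, f i := by
  rw [range_eq_Ico, sum_eq_sum_Ico_succ_bot n.succ_pos, Nat.succ_eq_add_one,
    Ico_add_one_right_eq_Icc]

lemma PowerSeries.factorial_mul_coeff_mul {R : Type*} [CommSemiring R] (p q : R⟦X⟧) (n : ℕ) :
    (n ! : R) * coeff n (p * q) = ∑ ij ∈ antidiagonal n,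
      (n.choose ij.1 : R) * ((ij.1 ! : R) * coeff ij.1 p) * ((ij.2 ! : R) * coeff ij.2 q) := by
  rw [coeff_mul, mul_sum]
  refine sum_congr rfl fun ij hij => ?_
  rw [HasAntidiagonal.mem_antidiagonal] at hij
  rw [← hij, ← Nat.add_choose_mul_factorial_mul_factorial, Nat.choose_symm_add]
  push_cast
  ring

lemma PowerSeries.X_pow_add_dvd_pow_sub_pow {R : Type*} [CommRing R] {p q : R⟦X⟧}
    (hp : X ∣ p) (hq : X ∣ q) {m : ℕ} (h : X ^ (m + 1) ∣ p - q) (k : ℕ) :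
    X ^ (m + k) ∣ p ^ k - q ^ k := by
  induction k with
  | zero => simp
  | succ k ih =>
    have hsplit : p ^ (k + 1) - q ^ (k + 1) = p * (p ^ k - q ^ k) + q ^ k * (p - q) := by ring
    rw [hsplit]
    refine dvd_add ?_ ?_
    · rw [← add_assoc, pow_succ, mul_comm]
      exact mul_dvd_mul hp ih
    · rw [show m + (k + 1) = k + (m + 1) by omega, pow_add]
      exact mul_dvd_mul (pow_dvd_pow_of_dvd hq k) h

lemma PowerSeries.coeff_inv_one_add {K : Type*} [Field K] (g : K⟦X⟧) (hg : constantCoeff g = 0)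
    (j : ℕ) : coeff j (1 + g)⁻¹ = ∑ k ∈ range (j + 1), (-1) ^ k * coeff j (g ^ k) := by
  have hunit : (1 + g)⁻¹ * (1 + g) = 1 :=
    PowerSeries.inv_mul_cancel _ (by simp [hg])
  have hgeom : ∑ k ∈ range (j + 1), (-g) ^ k = (1 + g)⁻¹ - (1 + g)⁻¹ * (-g) ^ (j + 1) := by
    rw [← mul_one_sub, ← mul_neg_geom_sum, ← mul_assoc, sub_neg_eq_add, hunit, one_mul]
  have htail : coeff j ((1 + g)⁻¹ * (-g) ^ (j + 1)) = 0 := by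
    refine X_pow_dvd_iff.mp (Dvd.dvd.mul_left (pow_dvd_pow_of_dvd ?_ _) _) j j.lt_succ_self
    exact X_dvd_iff.mpr (by simp [hg])
  have := congrArg (coeff j) hgeom
  rw [map_sub, htail, sub_zero, map_sum] at this
  rw [← this]
  refine sum_congr rfl fun k _ => ?_
  rw [neg_pow, ← map_one (C (R := K)), ← map_neg, ← map_pow, coeff_C_mul]

lemma degFallingFactorial_succ (lam x : ℝ) (n : ℕ) :
    degFallingFactorial lam x (n + 1) = degFallingFactorial lam x n * (x - n * lam) :=
  prod_range_succ _ _

lemma degFallingFactorial_add (lam x y : ℝ) (n : ℕ) :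
    degFallingFactorial lam (x + y) n = ∑ ij ∈ antidiagonal n,
      (n.choose ij.1 : ℝ) * (degFallingFactorial lam x ij.1 * degFallingFactorial lam y ij.2) := by
  induction n with
  | zero => simp [degFallingFactorial]
  | succ n ih =>
    rw [sum_antidiagonal_choose_succ_mul
      (fun i j => degFallingFactorial lam x i * degFallingFactorial lam y j),
      degFallingFactorial_succ, ih, sum_mul, ← sum_add_distrib]
    refine sum_congr rfl fun ij hij => ?_
    rw [HasAntidiagonal.mem_antidiagonal] at hij
    have hn : (n : ℝ) = ij.1 + ij.2 := by exact_mod_cast hij.symm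
    rw [Nat.choose_symm_of_eq_add hij.symm, degFallingFactorial_succ, degFallingFactorial_succ, hn]
    ring

lemma factorial_mul_coeff_degExpSeries (lam x : ℝ) (n : ℕ) :
    (n ! : ℝ) * coeff n (degExpSeries lam x) = degFallingFactorial lam x n := by
  rw [degExpSeries, coeff_mk, mul_div_cancel₀ _ (by positivity)]

lemma constantCoeff_degExpSeries (lam x : ℝ) : constantCoeff (degExpSeries lam x) = 1 := by
  simp [degExpSeries, degFallingFactorial]

lemma degExpSeries_mul (lam x y : ℝ) :
    degExpSeries lam x * degExpSeries lam y = degExpSeries lam (x + y) := by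
  ext n
  refine mul_left_cancel₀ (a := (n ! : ℝ)) (by positivity) ?_
  simp only [factorial_mul_coeff_mul, factorial_mul_coeff_degExpSeries, degFallingFactorial_add,
    mul_assoc]

lemma X_mul_degExpSubOneDivT (lam : ℝ) : X * degExpSubOneDivT lam = degExpSeries lam 1 - 1 := by
  have hshift := sub_const_eq_X_mul_shift (degExpSeries lam 1)
  rw [constantCoeff_degExpSeries, map_one] at hshift
  rw [hshift]
  congr 1
  ext n
  simp [degExpSubOneDivT, degExpSeries]

lemma factorial_succ_mul_coeff_degExpSeries_one_mul_degExpSubOneDivT (lam : ℝ) (n : ℕ) :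
    ((n + 1)! : ℝ) * coeff n (degExpSeries lam 1 * degExpSubOneDivT lam) =
      dimorphicMersenne lam (n + 1) := by
  have hX : X * (degExpSeries lam 1 * degExpSubOneDivT lam) =
      degExpSeries lam 2 - degExpSeries lam 1 := by
    rw [mul_left_comm, X_mul_degExpSubOneDivT, mul_sub, mul_one, degExpSeries_mul]
    norm_num
  rw [← coeff_succ_X_mul, hX, map_sub, mul_sub, factorial_mul_coeff_degExpSeries,
    factorial_mul_coeff_degExpSeries, dimorphicMersenne]

lemma constantCoeff_degExpSubOneDivT (lam : ℝ) : constantCoeff (degExpSubOneDivT lam) = 1 := by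
  simp [degExpSubOneDivT, degFallingFactorial]

lemma constantCoeff_degBernoulliSeries (lam x : ℝ) :
    constantCoeff (degBernoulliSeries lam x) = 1 := by
  simp [degBernoulliSeries, constantCoeff_degExpSeries, constantCoeff_degExpSubOneDivT]

lemma inv_degBernoulliSeries_mul_degExpSeries_add_one (lam x : ℝ) :
    (degBernoulliSeries lam x)⁻¹ * degExpSeries lam (x + 1) =
      degExpSeries lam 1 * degExpSubOneDivT lam := by
  have hD : (degExpSubOneDivT lam)⁻¹ * degExpSubOneDivT lam = 1 :=
    PowerSeries.inv_mul_cancel _ (by simp [constantCoeff_degExpSubOneDivT])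
  have hB : degBernoulliSeries lam x * (degExpSeries lam 1 * degExpSubOneDivT lam) =
      degExpSeries lam (x + 1) := by
    rw [← degExpSeries_mul, degBernoulliSeries]
    linear_combination degExpSeries lam x * degExpSeries lam 1 * hD
  rw [← hB, ← mul_assoc, PowerSeries.inv_mul_cancel _ (by simp [constantCoeff_degBernoulliSeries]),
    one_mul]

lemma PowerSeries.coeff_sum_C_mul_X_pow_succ_pow {R : Type*} [CommSemiring R] {N : ℕ}
    (c : Fin N → R) (j k : ℕ) :
    coeff j ((∑ i, C (c i) * X ^ (i.1 + 1)) ^ k) =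
      ∑ l ∈ (piAntidiag univ k).filter (fun l : Fin N → ℕ => ∑ i, (i.1 + 1) * l i = j),
        (Nat.multinomial univ l : R) * ∏ i, c i ^ l i := by
  rw [sum_pow_eq_sum_piAntidiag, map_sum, sum_filter]
  refine sum_congr rfl fun l _ => ?_
  have hterm : (Nat.multinomial univ l : R⟦X⟧) * ∏ i, (C (c i) * X ^ (i.1 + 1)) ^ l i =
      C ((Nat.multinomial univ l : R) * ∏ i, c i ^ l i) * X ^ (∑ i, (i.1 + 1) * l i) := by
    simp only [mul_pow, prod_mul_distrib, ← pow_mul, prod_pow_eq_pow_sum, map_mul, map_natCast,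
      map_prod, map_pow, mul_assoc]
  rw [hterm, coeff_C_mul_X_pow]
  exact if_congr eq_comm rfl rfl

lemma PowerSeries.factorial_mul_coeff_pow_eq_incompleteBell (g : ℝ⟦X⟧)
    (hg : constantCoeff g = 0) (j k : ℕ) :
    (j ! : ℝ) * coeff j (g ^ k) = k ! * incompleteBell j k (fun i => i ! * coeff i g) := by
  -- only `g_1, …, g_{j-k+1}` can contribute to the coefficient of `X ^ j` in `g ^ k`
  set P : ℝ⟦X⟧ := ∑ i : Fin (j - k + 1), C (coeff (i.1 + 1) g) * X ^ (i.1 + 1) with hP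
  have hgP : X ^ (j - k + 1 + 1) ∣ g - P := by
    refine X_pow_dvd_iff.mpr fun d hd => ?_
    rw [map_sub, hP, map_sum]
    simp only [coeff_C_mul_X_pow]
    rcases d with _ | e
    · simp [hg]
    · have he : e < j - k + 1 := by omega
      rw [sum_eq_single_of_mem ⟨e, he⟩ (mem_univ _) fun i _ hi => if_neg fun h => hi
        (Fin.ext (show i.1 = e by omega)), if_pos rfl, sub_self]
  have hXP : X ∣ P := dvd_sum fun i _ => dvd_mul_of_dvd_right (dvd_pow_self X i.1.succ_ne_zero) _
  have htrunc : coeff j (g ^ k) = coeff j (P ^ k) := by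
    rw [← sub_eq_zero, ← map_sub]
    exact X_pow_dvd_iff.mp (X_pow_add_dvd_pow_sub_pow (X_dvd_iff.mpr hg) hXP hgP k) j (by omega)
  have hindex : (piAntidiag univ k).filter (fun l : Fin (j - k + 1) → ℕ =>
        ∑ i, (i.1 + 1) * l i = j) =
      (Fintype.piFinset fun _ : Fin (j - k + 1) => range (j + 1)).filter
        (fun l => ∑ i, l i = k ∧ ∑ i, (i.1 + 1) * l i = j) := by
    ext l
    simp only [mem_filter, mem_piAntidiag, Fintype.mem_piFinset, mem_range, mem_univ,
      implies_true, and_true]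
    refine ⟨fun ⟨hk, hj⟩ => ⟨fun i => ?_, hk, hj⟩, fun ⟨_, hk, hj⟩ => ⟨hk, hj⟩⟩
    have := single_le_sum (f := fun i : Fin (j - k + 1) => (i.1 + 1) * l i)
      (fun _ _ => Nat.zero_le _) (mem_univ i)
    nlinarith
  rw [htrunc, hP, coeff_sum_C_mul_X_pow_succ_pow, hindex, incompleteBell, mul_sum, mul_sum]
  refine sum_congr rfl fun l hl => ?_
  have hk : ∑ i, l i = k := (mem_filter.mp hl).2.1
  have hmult : (∏ i, ((l i) ! : ℝ)) * Nat.multinomial univ l = k ! := by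
    exact_mod_cast hk ▸ Nat.multinomial_spec univ l
  have hprod : (∏ i, ((l i) ! : ℝ)) ≠ 0 := prod_ne_zero_iff.mpr fun i _ => by positivity
  simp only [mul_div_cancel_left₀ _ (show (((_ : ℕ) + 1) ! : ℝ) ≠ 0 by positivity)]
  rw [← hmult]
  field_simp

lemma incompleteBell_congr {n k : ℕ} {x y : ℕ → ℝ} (h : ∀ i, x (i + 1) = y (i + 1)) :
    incompleteBell n k x = incompleteBell n k y := by
  simp only [incompleteBell, h]

lemma factorial_mul_coeff_degBernoulliSeries_sub_one (lam x : ℝ) (i : ℕ) :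
    ((i + 1)! : ℝ) * coeff (i + 1) (degBernoulliSeries lam x - 1) = degBernoulli lam x (i + 1) := by
  simp [degBernoulli, coeff_one]

theorem dimorphicMersenne_eq_sum_general (lam : ℝ) (n : ℕ) (x : ℝ) :
    dimorphicMersenne lam (n + 1) / (n + 1 : ℝ) =
      degFallingFactorial lam (x + 1) n +
        ∑ j ∈ Finset.Icc 1 n, ∑ k ∈ Finset.Icc 1 j,
          (n.choose j : ℝ) * degFallingFactorial lam (x + 1) (n - j) *
            (-1 : ℝ) ^ k * (k.factorial : ℝ) *
              incompleteBell j k (fun i => degBernoulli lam x i) := by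
  set g := degBernoulliSeries lam x - 1
  have hg : constantCoeff g = 0 := by simp [g, constantCoeff_degBernoulliSeries]
  have hM : dimorphicMersenne lam (n + 1) / (n + 1 : ℝ) =
      n ! * coeff n ((1 + g)⁻¹ * degExpSeries lam (x + 1)) := by
    rw [add_sub_cancel, inv_degBernoulliSeries_mul_degExpSeries_add_one,
      ← factorial_succ_mul_coeff_degExpSeries_one_mul_degExpSubOneDivT, Nat.factorial_succ]
    push_cast
    field_simp
  have hcoeff (j : ℕ) (hj : 1 ≤ j) : (j ! : ℝ) * coeff j (1 + g)⁻¹ =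
      ∑ k ∈ Icc 1 j, (-1) ^ k * k ! * incompleteBell j k (fun i => degBernoulli lam x i) := by
    rw [coeff_inv_one_add g hg, sum_range_succ_eq_add_sum_Icc, pow_zero, pow_zero, coeff_one,
      if_neg (by omega), mul_zero, zero_add, mul_sum]
    refine sum_congr rfl fun k _ => ?_
    rw [mul_left_comm, factorial_mul_coeff_pow_eq_incompleteBell g hg,
      incompleteBell_congr (factorial_mul_coeff_degBernoulliSeries_sub_one lam x)]
    ring
  rw [hM, factorial_mul_coeff_mul, Nat.sum_antidiagonal_eq_sum_range_succ
    (fun i j => (n.choose i : ℝ) * ((i ! : ℝ) * coeff i (1 + g)⁻¹) *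
      ((j ! : ℝ) * coeff j (degExpSeries lam (x + 1)))), sum_range_succ_eq_add_sum_Icc]
  congr 1
  · simp [hg, factorial_mul_coeff_degExpSeries]
  · refine sum_congr rfl fun j hj => ?_
    rw [hcoeff j (mem_Icc.mp hj).1, factorial_mul_coeff_degExpSeries, mul_sum, sum_mul]
    refine sum_congr rfl fun k _ => ?_
    ring

/-- Theorem 2: for `n ≥ 1` and any `x`,
`M_{n+1,λ}/(n+1) = (x+1)_{n,λ} + ∑_{j=1}^{n} ∑_{k=1}^{j} C(n,j) (x+1)_{n-j,λ} (-1)^k k!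
B_{j,k}(β_{1,λ}(x), …, β_{j-k+1,λ}(x))`. -/
theorem dimorphicMersenne_eq_sum (lam : ℝ) (n : ℕ) (hn : 1 ≤ n) (x : ℝ) :
    dimorphicMersenne lam (n + 1) / (n + 1 : ℝ) =
      degFallingFactorial lam (x + 1) n +
        ∑ j ∈ Finset.Icc 1 n, ∑ k ∈ Finset.Icc 1 j,
          (n.choose j : ℝ) * degFallingFactorial lam (x + 1) (n - j) *
            (-1 : ℝ) ^ k * (k.factorial : ℝ) *
              incompleteBell j k (fun i => degBernoulli lam x i) :=
  dimorphicMersenne_eq_sum_general lam n x
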